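/- Let k ≥ 1 and let q₁, …, q_{k+1} be unit imaginary quaternions with q_i ≠ ±q_j whenever i ≠ j. In ℍ^{k+1}, let U_k be the real span of the standard basis vectors ε₁, …, ε_{k+1} together with the vectors e_j = q_j·ε_j + q_{j+1}·ε_{j+1} for j = 1, …, k. Then for every unit imaginary quaternion p, U_k ∩ p•U_k = 0; that is, the projection ℍ^{k+1} → ℍ^{k+1}/U_k defines a co-CR quaternionic vector space. -/

import Mathlib

/-!
Every vector of `U_k` has coordinates `x_i = a_i + b_i q_i` in the copy `ℝ + ℝ q_i` of `ℂ`, and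
its `q_i`-coefficients have vanishing alternating sum. If `x = p y` with `x, y ∈ U_k`, multiplying
`x_i = p y_i` on the right by the conjugate of `y_i` puts `p` into `ℝ + ℝ q_i` unless `y_i = 0`,
and the only square roots of `-1` there are `±q_i`. Hence `x_i = y_i = 0` except at the (at most
one) index `i₀` with `p = ±q_{i₀}`; there the alternating sums force `x_{i₀}` and `y_{i₀}` to be
real, and a real number is `p` times a real only when both vanish.
-/

open Quaternion

/-- Componentwise left multiplication by a quaternion `p` on `ℍ^n`, as a real-linear map. -/
noncomputable def mulLeftLM (n : ℕ) (p : Quaternion ℝ) :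
    (Fin n → Quaternion ℝ) →ₗ[ℝ] (Fin n → Quaternion ℝ) :=
  LinearMap.pi fun i => (LinearMap.mulLeft ℝ p).comp (LinearMap.proj i)

/-- The model subspace `U_k ⊆ ℍ^{k+1}`: the real span of the standard basis vectors
`ε₁, …, ε_{k+1}` together with the vectors `e_j = q_j·ε_j + q_{j+1}·ε_{j+1}`,
`j = 1, …, k`. -/
noncomputable def UkSub (k : ℕ) (q : Fin (k + 1) → Quaternion ℝ) :
    Submodule ℝ (Fin (k + 1) → Quaternion ℝ) :=
  Submodule.span ℝ
    ((Set.range fun i : Fin (k + 1) => Pi.single i (1 : Quaternion ℝ)) ∪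
     (Set.range fun j : Fin k =>
        Pi.single j.castSucc (q j.castSucc) + Pi.single j.succ (q j.succ)))

namespace Quaternion

variable {p q : ℍ[ℝ]}

theorem coe_add_smul_mul_coe_add_smul (hq : q ^ 2 = -1) (a b c d : ℝ) :
    ((a : ℍ[ℝ]) + b • q) * (c + d • q) = ↑(a * c - b * d) + (a * d + b * c) • q := by
  have coe_eq_smul_one (r : ℝ) : (r : ℍ[ℝ]) = r • 1 := by rw [← coe_mul_eq_smul, mul_one]
  rw [sq] at hq
  simp only [coe_eq_smul_one, add_mul, mul_add, smul_mul_smul_comm, one_mul, mul_one, hq]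
  module

theorem coe_add_smul_mul_coe_add_neg_smul (hq : q ^ 2 = -1) (a b : ℝ) :
    ((a : ℍ[ℝ]) + b • q) * (a + (-b) • q) = ↑(a ^ 2 + b ^ 2) := by
  rw [coe_add_smul_mul_coe_add_smul hq]
  ring_nf
  simp

theorem eq_zero_of_coe_add_smul_eq_zero (hq : q ^ 2 = -1) {a b : ℝ}
    (h : (a : ℍ[ℝ]) + b • q = 0) : a = 0 ∧ b = 0 := by
  have hnorm := coe_add_smul_mul_coe_add_neg_smul hq a b
  rw [h, zero_mul, eq_comm, ← coe_zero, coe_inj] at hnorm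
  constructor <;> nlinarith

theorem eq_or_eq_neg_of_eq_coe_add_smul (hp : p ^ 2 = -1) (hq : q ^ 2 = -1) {a b : ℝ}
    (h : p = a + b • q) : p = q ∨ p = -q := by
  have hsq := coe_add_smul_mul_coe_add_smul hq a b a b
  rw [← h, ← sq, hp, eq_comm, ← sub_eq_zero, sub_neg_eq_add, ← coe_one, add_right_comm,
    ← coe_add] at hsq
  obtain ⟨hre, him⟩ := eq_zero_of_coe_add_smul_eq_zero hq hsq
  obtain rfl : a = 0 := pow_eq_zero_iff two_ne_zero |>.mp (by nlinarith)
  obtain rfl | rfl : b = 1 ∨ b = -1 := eq_or_eq_neg_of_sq_eq_sq b 1 (by nlinarith)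
  all_goals simp [h]

theorem coeffs_eq_zero_of_coe_add_smul_eq_mul (hp : p ^ 2 = -1) (hq : q ^ 2 = -1)
    (hpq : p ≠ q) (hpq' : p ≠ -q) {a b c d : ℝ}
    (h : (a : ℍ[ℝ]) + b • q = p * (c + d • q)) : a = 0 ∧ b = 0 ∧ c = 0 ∧ d = 0 := by
  obtain ⟨rfl, rfl⟩ : c = 0 ∧ d = 0 := by
    by_contra hcd
    have hN : c ^ 2 + d ^ 2 ≠ 0 := by
      contrapose! hcd
      constructor <;> nlinarith
    have hmul := congrArg (· * ((c : ℍ[ℝ]) + (-d) • q)) h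
    simp only [mul_assoc, coe_add_smul_mul_coe_add_neg_smul hq, coe_add_smul_mul_coe_add_smul hq,
      mul_coe_eq_smul] at hmul
    have hp_mem : p = ↑((a * c - b * -d) / (c ^ 2 + d ^ 2)) +
        ((a * -d + b * c) / (c ^ 2 + d ^ 2)) • q := by
      rw [div_eq_inv_mul, div_eq_inv_mul, mul_smul, ← smul_coe, ← smul_add, hmul, smul_smul,
        inv_mul_cancel₀ hN, one_smul]
    rcases eq_or_eq_neg_of_eq_coe_add_smul hp hq hp_mem with h | h
    exacts [hpq h, hpq' h]
  rw [coe_zero, zero_smul, add_zero, mul_zero] at h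
  exact ⟨(eq_zero_of_coe_add_smul_eq_zero hq h).1, (eq_zero_of_coe_add_smul_eq_zero hq h).2,
    rfl, rfl⟩

theorem eq_zero_of_coe_eq_mul_coe (hp : p ^ 2 = -1) {a c : ℝ} (h : (a : ℍ[ℝ]) = p * c) :
    a = 0 ∧ c = 0 := by
  refine (eq_zero_of_coe_add_smul_eq_zero hp (b := -c) ?_).imp_right neg_eq_zero.mp
  rw [h, mul_coe_eq_smul, neg_smul, add_neg_cancel]

end Quaternion

theorem Fin.eq_zero_of_sum_neg_one_pow_mul_eq_zero {R : Type*} [Ring R] {n : ℕ} {c : Fin n → R}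
    (hc : ∑ i : Fin n, (-1) ^ (i : ℕ) * c i = 0) {i₀ : Fin n} (h : ∀ i ≠ i₀, c i = 0) :
    c i₀ = 0 := by
  rw [Finset.sum_eq_single i₀ (fun i _ hi => by rw [h i hi, mul_zero]) (by simp)] at hc
  exact ((isUnit_neg_one.pow _).mul_right_eq_zero).mp hc

theorem exists_coe_add_smul_of_mem_UkSub {k : ℕ} {q : Fin (k + 1) → ℍ[ℝ]}
    {x : Fin (k + 1) → ℍ[ℝ]} (hx : x ∈ UkSub k q) :
    ∃ a b : Fin (k + 1) → ℝ,
      (∀ i, x i = a i + b i • q i) ∧ ∑ i : Fin (k + 1), (-1) ^ (i : ℕ) * b i = 0 := by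
  induction hx using Submodule.span_induction with
  | mem y hy =>
    rcases hy with ⟨i, rfl⟩ | ⟨j, rfl⟩
    · refine ⟨Pi.single i 1, 0, fun l => ?_, by simp⟩
      rcases eq_or_ne l i with rfl | hl <;> simp [*]
    · have hj : j.castSucc ≠ j.succ := Fin.castSucc_lt_succ.ne
      refine ⟨0, Pi.single j.castSucc 1 + Pi.single j.succ 1, fun l => ?_, ?_⟩
      · rcases eq_or_ne l j.castSucc with rfl | hl
        · simp [hj]
        · rcases eq_or_ne l j.succ with rfl | hl' <;> simp [*]
      · simp [Pi.single_apply, mul_add, Finset.sum_add_distrib, pow_succ]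
  | zero => exact ⟨0, 0, by simp, by simp⟩
  | add u v _ _ hu hv =>
    obtain ⟨a, b, hu, hbu⟩ := hu
    obtain ⟨a', b', hv, hbv⟩ := hv
    refine ⟨a + a', b + b', fun i => ?_, ?_⟩
    · simp only [Pi.add_apply, hu, hv, coe_add, add_smul]; abel
    · simp [mul_add, Finset.sum_add_distrib, hbu, hbv]
  | smul r u _ hu =>
    obtain ⟨a, b, hu, hb⟩ := hu
    refine ⟨r • a, r • b, fun i => ?_, ?_⟩
    · simp only [Pi.smul_apply, hu, smul_add, smul_smul, smul_eq_mul, ← smul_coe]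
    · simp [mul_left_comm _ r, ← Finset.mul_sum, hb]

theorem coeffs_eq_zero_of_forall_coe_add_smul_eq_mul {n : ℕ} {q : Fin n → ℍ[ℝ]} {p : ℍ[ℝ]}
    (hq : ∀ i, q i ^ 2 = -1) (hq' : ∀ i j, i ≠ j → q i ≠ q j ∧ q i ≠ -q j) (hp : p ^ 2 = -1)
    {a b c d : Fin n → ℝ} (hb : ∑ i : Fin n, (-1) ^ (i : ℕ) * b i = 0)
    (hd : ∑ i : Fin n, (-1) ^ (i : ℕ) * d i = 0)
    (h : ∀ i, (a i : ℍ[ℝ]) + b i • q i = p * (c i + d i • q i)) (i₀ : Fin n) :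
    c i₀ = 0 ∧ d i₀ = 0 := by
  have hzero (i) (hi : p ≠ q i ∧ p ≠ -q i) : b i = 0 ∧ c i = 0 ∧ d i = 0 :=
    (coeffs_eq_zero_of_coe_add_smul_eq_mul hp (hq i) hi.1 hi.2 (h i)).2
  by_cases hi₀ : p = q i₀ ∨ p = -q i₀
  · have hne (i) (hi : i ≠ i₀) : p ≠ q i ∧ p ≠ -q i := by
      obtain ⟨h₁, h₂⟩ := hq' i₀ i hi.symm
      rcases hi₀ with rfl | rfl
      · exact ⟨h₁, h₂⟩
      · exact ⟨fun h => h₂ (neg_eq_iff_eq_neg.mp h), fun h => h₁ (neg_inj.mp h)⟩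
    have hb₀ := Fin.eq_zero_of_sum_neg_one_pow_mul_eq_zero hb fun i hi => (hzero i (hne i hi)).1
    have hd₀ := Fin.eq_zero_of_sum_neg_one_pow_mul_eq_zero hd fun i hi => (hzero i (hne i hi)).2.2
    have h₀ := h i₀
    rw [hb₀, hd₀, zero_smul, add_zero, add_zero] at h₀
    exact ⟨(eq_zero_of_coe_eq_mul_coe hp h₀).2, hd₀⟩
  · exact (hzero i₀ (not_or.mp hi₀)).2

theorem stmt10_general (k : ℕ) (q : Fin (k + 1) → Quaternion ℝ)
    (hq : ∀ i, q i ^ 2 = -1)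
    (hq' : ∀ i j, i ≠ j → q i ≠ q j ∧ q i ≠ -q j)
    (p : Quaternion ℝ) (hp : p ^ 2 = -1) :
    UkSub k q ⊓ (UkSub k q).map (mulLeftLM (k + 1) p) = ⊥ := by
  refine eq_bot_iff.2 ?_
  rintro _ ⟨hxU, y, hyU, rfl⟩
  obtain ⟨a, b, hx, hb⟩ := exists_coe_add_smul_of_mem_UkSub hxU
  obtain ⟨c, d, hy, hd⟩ := exists_coe_add_smul_of_mem_UkSub hyU
  have hcd := coeffs_eq_zero_of_forall_coe_add_smul_eq_mul hq hq' hp hb hd fun i => by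
    rw [← hx, ← hy]; rfl
  ext1 i
  simp [mulLeftLM, hy, hcd]

/-- For `k ≥ 1` and unit imaginary quaternions `q₁, …, q_{k+1}` with `q_i ≠ ±q_j`
(`i ≠ j`), the subspace `U_k ⊆ ℍ^{k+1}` satisfies `U_k ∩ p•U_k = 0` for every unit
imaginary quaternion `p`; that is, the projection `ℍ^{k+1} → ℍ^{k+1}/U_k` defines a
co-CR quaternionic vector space. -/
theorem stmt10 (k : ℕ) (hk : 1 ≤ k) (q : Fin (k + 1) → Quaternion ℝ)
    (hq : ∀ i, q i ^ 2 = -1)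
    (hq' : ∀ i j, i ≠ j → q i ≠ q j ∧ q i ≠ -q j)
    (p : Quaternion ℝ) (hp : p ^ 2 = -1) :
    UkSub k q ⊓ (UkSub k q).map (mulLeftLM (k + 1) p) = ⊥ :=
  stmt10_general k q hq hq' p hp
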